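/- Let ψ : Γ → Y be a dominant, generically finite, separable morphism of degree b between normal projective varieties over an algebraically closed field, étale over a dense open V ⊆ Y. Let y₁, y₂ ∈ V be distinct points whose combined preimage consists of 2b distinct points γ₁, …, γ_{2b}. If α is a global i-form on Γ vanishing at γ₁, …, γ_{2b-1} but not at γ_{2b}, then the trace Tr(α), a global section of (∧ⁱΩ_Y)^∨∨, vanishes at y₁ but not at y₂. -/
import Mathlib


/-- Let `ψ : Γ → Y` be a dominant, generically finite, separable
morphism of degree `b` between normal projective varieties over an algebraically closed
field `k`, étale over a dense open `V ⊆ Y`.  Over `V`, the trace of an `i`-form `α` at a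
point `y` is the sum of the values of `α` (in compatible local frames, in which we record
the values of `α` as elements of `k`) at the `b` preimages of `y`.

Let `y₁ ≠ y₂ ∈ V` have combined preimage consisting of `2b` distinct points
`γ₁, …, γ_{2b}` (the points `γ (i)` for `i : Fin (2b)`), with `γ_{2b}` lying over `y₂`.
If `α` vanishes at `γ₁, …, γ_{2b-1}` but not at `γ_{2b}`, then the trace `Tr(α)` — a
global section of `(∧ⁱΩ_Y)^∨∨`, computed over the étale locus as the fiber sum — vanishes
at `y₁` but not at `y₂`. -/
theorem stmt_15 (k Γ Y : Type) [Field k] (ψ : Γ → Y) (b : ℕ) (hb : 1 ≤ b)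
    (V : Set Y) (hV : ∀ y ∈ V, Nat.card (ψ ⁻¹' {y}) = b)  -- `ψ` is étale of degree `b` over `V`
    (α : Γ → k)                                            -- values of the `i`-form `α`
    (y₁ y₂ : Y) (hy₁ : y₁ ∈ V) (hy₂ : y₂ ∈ V) (hy : y₁ ≠ y₂)
    (γ : Fin (2 * b) → Γ) (hγinj : Function.Injective γ)
    (hγ : ψ ⁻¹' {y₁, y₂} = Set.range γ)
    (hlast : ψ (γ ⟨2 * b - 1, by omega⟩) = y₂)
    (hvan : ∀ i : Fin (2 * b), (i : ℕ) < 2 * b - 1 → α (γ i) = 0)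
    (hnonvan : α (γ ⟨2 * b - 1, by omega⟩) ≠ 0) :
    ∀ F₁ F₂ : Finset Γ, (↑F₁ : Set Γ) = ψ ⁻¹' {y₁} → (↑F₂ : Set Γ) = ψ ⁻¹' {y₂} →
      (∑ x ∈ F₁, α x) = 0 ∧ (∑ x ∈ F₂, α x) ≠ 0 := by
  intro F₁ F₂ hF₁ hF₂
  set glast : Γ := γ ⟨2 * b - 1, by omega⟩ with hglast
  constructor
  · apply Finset.sum_eq_zero
    intro x hx
    have hx1 : ψ x = y₁ := by
      have : x ∈ (↑F₁ : Set Γ) := hx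
      rw [hF₁] at this; exact this
    have hxr : x ∈ Set.range γ := by
      rw [← hγ]; simp [hx1]
    obtain ⟨i, rfl⟩ := hxr
    apply hvan
    rcases lt_or_eq_of_le (Nat.lt_succ_iff.mp (by omega : (i : ℕ) < 2 * b - 1 + 1)) with h | h
    · exact h
    · exfalso
      have : γ i = glast := by
        congr 1; exact Fin.ext h
      rw [this, hglast] at hx1
      exact hy (hx1.symm.trans hlast)
  · have hmem : glast ∈ F₂ := by
      have : glast ∈ (↑F₂ : Set Γ) := by rw [hF₂]; exact hlast
      exact this
    rw [Finset.sum_eq_single_of_mem glast hmem]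
    · exact hnonvan
    · intro x hx hne
      have hx2 : ψ x = y₂ := by
        have : x ∈ (↑F₂ : Set Γ) := hx
        rw [hF₂] at this; exact this
      have hxr : x ∈ Set.range γ := by
        rw [← hγ]; simp [hx2]
      obtain ⟨i, rfl⟩ := hxr
      apply hvan
      have : (i : ℕ) ≠ 2 * b - 1 := by
        intro h
        exact hne (by congr 1; exact Fin.ext h)
      omega
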